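/- Let σ₊, δ₋ > 0 and set K := (1/4)·(σ₊/δ₋ + δ₋/σ₊)². Then the product of the Gaussian conditional variances satisfies (Δx₁|_{x₂})²·(Δq₁|_{q₂})² = (2/(σ₊²+δ₋²))·(σ₊²δ₋²/(2(σ₊²+δ₋²))) = σ₊²δ₋²/(σ₊²+δ₋²)² = 1/(4K). Moreover K ≥ 1, so that (Δx₁|_{x₂})²·(Δq₁|_{q₂})² ≤ 1/4, with equality if and only if σ₊ = δ₋. -/

import Mathlib

/-!
Writing `a = σ₊²` and `b = δ₋²`, the EPR product is `a b / (a + b)²`, which is at most `1/4`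
because `(a + b)² - 4 a b = (a - b)²`, with equality exactly when `a = b`. The same square
appears in `K = 1 + (σ₊/δ₋ - δ₋/σ₊)² / 4`, and `4 K` is the reciprocal of the EPR product.
-/

/-- The Schmidt number of the two-mode Gaussian approximation of the SPDC two-photon state. -/
noncomputable def schmidtNumber (σp δm : ℝ) : ℝ :=
  1 / 4 * (σp / δm + δm / σp) ^ 2

theorem two_div_mul_div_two_mul {K : Type*} [Field K] [NeZero (2 : K)] (p s : K) :
    2 / s * (p / (2 * s)) = p / s ^ 2 := by
  rcases eq_or_ne s 0 with rfl | hs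
  · simp
  · field_simp

section OrderedField

variable {K : Type*} [Field K] [LinearOrder K] [IsStrictOrderedRing K]

theorem mul_div_add_sq_le_one_div_four (a b : K) : a * b / (a + b) ^ 2 ≤ 1 / 4 := by
  rcases eq_or_ne (a + b) 0 with hab | hab
  · simp [hab]
  · rw [div_le_div_iff₀ (by positivity) four_pos]
    linarith [four_mul_le_sq_add a b]

theorem mul_div_add_sq_eq_one_div_four_iff {a b : K} (hab : a + b ≠ 0) :
    a * b / (a + b) ^ 2 = 1 / 4 ↔ a = b := by
  rw [div_eq_div_iff (by positivity) four_ne_zero, ← sub_eq_zero]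
  have key : a * b * 4 - 1 * (a + b) ^ 2 = -(a - b) ^ 2 := by ring
  rw [key, neg_eq_zero, pow_eq_zero_iff two_ne_zero, sub_eq_zero]

end OrderedField

theorem one_div_four_mul_schmidtNumber {σp δm : ℝ} (hσ : σp ≠ 0) (hδ : δm ≠ 0) :
    1 / (4 * schmidtNumber σp δm) = σp ^ 2 * δm ^ 2 / (σp ^ 2 + δm ^ 2) ^ 2 := by
  unfold schmidtNumber
  field_simp

theorem schmidtNumber_eq_one_add {σp δm : ℝ} (hσ : σp ≠ 0) (hδ : δm ≠ 0) :
    schmidtNumber σp δm = 1 + 1 / 4 * (σp / δm - δm / σp) ^ 2 := by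
  unfold schmidtNumber
  field_simp
  ring

theorem one_le_schmidtNumber {σp δm : ℝ} (hσ : σp ≠ 0) (hδ : δm ≠ 0) :
    1 ≤ schmidtNumber σp δm := by
  rw [schmidtNumber_eq_one_add hσ hδ]
  exact le_add_of_nonneg_right (by positivity)

theorem epr_product_eq_inv_schmidt (σp δm : ℝ) (hσ : 0 < σp) (hδ : 0 < δm) :
    (2 / (σp ^ 2 + δm ^ 2)) * (σp ^ 2 * δm ^ 2 / (2 * (σp ^ 2 + δm ^ 2)))
        = σp ^ 2 * δm ^ 2 / (σp ^ 2 + δm ^ 2) ^ 2 ∧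
    σp ^ 2 * δm ^ 2 / (σp ^ 2 + δm ^ 2) ^ 2
        = 1 / (4 * ((1 / 4) * (σp / δm + δm / σp) ^ 2)) ∧
    1 ≤ (1 / 4) * (σp / δm + δm / σp) ^ 2 ∧
    (2 / (σp ^ 2 + δm ^ 2)) * (σp ^ 2 * δm ^ 2 / (2 * (σp ^ 2 + δm ^ 2))) ≤ 1 / 4 ∧
    ((2 / (σp ^ 2 + δm ^ 2)) * (σp ^ 2 * δm ^ 2 / (2 * (σp ^ 2 + δm ^ 2))) = 1 / 4
        ↔ σp = δm) := by
  have hsum : σp ^ 2 + δm ^ 2 ≠ 0 := by positivity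
  rw [two_div_mul_div_two_mul]
  refine ⟨rfl, (one_div_four_mul_schmidtNumber hσ.ne' hδ.ne').symm,
    one_le_schmidtNumber hσ.ne' hδ.ne', mul_div_add_sq_le_one_div_four _ _, ?_⟩
  rw [mul_div_add_sq_eq_one_div_four_iff hsum, sq_eq_sq₀ hσ.le hδ.le]
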